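/- arXiv:1209.4177 — 6 statements merged into one kernel-verified Lean document; each statement's English description precedes it below -/
import Mathlib

section
/- If f : ℝ → ℝ is a probability density function that is symmetric (f(-z) = f(z) for all z) and Π : ℝ × ℝ → [0,1] satisfies Π(-z,δ) + Π(z,δ) = 1 for all z, δ ∈ ℝ, then for every δ, the function x ↦ 2 f(x) Π(x, δ) is a probability density function, i.e., it is nonnegative and integrates to 1 over ℝ. -/
open MeasureTheory

theorem skew_symmetric_is_density
    (f : ℝ → ℝ) (P : ℝ → ℝ → ℝ)
    (hf_meas : Measurable f)
    (hf_nonneg : ∀ z, 0 ≤ f z)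
    (hf_symm : ∀ z, f (-z) = f z)
    (hf_int : ∫ z, f z = 1)
    (hf_integrable : Integrable f)
    (hP_meas : ∀ δ, Measurable (fun z => P z δ))
    (hP_range : ∀ z δ, P z δ ∈ Set.Icc (0:ℝ) 1)
    (hP_skew : ∀ z δ, P (-z) δ + P z δ = 1) :
    ∀ δ, (∀ x, 0 ≤ 2 * f x * P x δ) ∧ (∫ x, 2 * f x * P x δ = 1) := by
  intro δ
  have hP0 : ∀ z, 0 ≤ P z δ := fun z => (hP_range z δ).1
  have hP1 : ∀ z, P z δ ≤ 1 := fun z => (hP_range z δ).2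
  have hg_int : Integrable (fun x => f x * P x δ) := by
    refine hf_integrable.mono ((hf_meas.mul (hP_meas δ)).aestronglyMeasurable) ?_
    filter_upwards with x
    rw [Real.norm_eq_abs, Real.norm_eq_abs, abs_of_nonneg (mul_nonneg (hf_nonneg x) (hP0 x)),
      abs_of_nonneg (hf_nonneg x)]
    calc f x * P x δ ≤ f x * 1 := mul_le_mul_of_nonneg_left (hP1 x) (hf_nonneg x)
      _ = f x := mul_one _
  have hneg : ∫ x, f (-x) * P (-x) δ = ∫ x, f x * P x δ := by
    exact integral_neg_eq_self (fun x => f x * P x δ) volume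
  have key : (∫ x, f x * P x δ) + (∫ x, f x * P x δ) = 1 := by
    have h1 : ∀ x, f x = f (-x) * P (-x) δ + f x * P x δ := by
      intro x
      rw [hf_symm, ← mul_add, hP_skew, mul_one]
    have hg_int' : Integrable (fun x => f (-x) * P (-x) δ) := hg_int.comp_neg
    calc (∫ x, f x * P x δ) + (∫ x, f x * P x δ)
        = (∫ x, f (-x) * P (-x) δ) + (∫ x, f x * P x δ) := by rw [hneg]
      _ = ∫ x, (f (-x) * P (-x) δ + f x * P x δ) := (integral_add hg_int' hg_int).symm
      _ = ∫ x, f x := by simp_rw [← h1]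
      _ = 1 := hf_int
  constructor
  · intro x
    exact mul_nonneg (mul_nonneg (by norm_num) (hf_nonneg x)) (hP0 x)
  · have : ∫ x, 2 * f x * P x δ = 2 * ∫ x, f x * P x δ := by
      simp_rw [mul_assoc]
      exact integral_const_mul 2 _
    rw [this]; linarith
end

section
/- The limit as z → ∞ of z · exp(-z²) · ∫₀^z exp(y²) dy equals 1/2. -/
open Filter Real

private lemma exp_int (c a z : ℝ) (hc : c ≠ 0) :
    ∫ y in a..z, Real.exp (c*y) = (Real.exp (c*z) - Real.exp (c*a))/c := by
  have h : ∀ y : ℝ, HasDerivAt (fun y => Real.exp (c*y)/c) (Real.exp (c*y)) y := by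
    intro y
    have := ((Real.hasDerivAt_exp (c*y)).comp y ((hasDerivAt_id y).const_mul c))
    simpa [mul_comm, mul_div_assoc, mul_div_cancel_left₀ _ hc] using this.div_const c
  rw [intervalIntegral.integral_eq_sub_of_hasDerivAt (fun y _ => h y)
    (Continuous.intervalIntegrable (by continuity) a z)]
  ring

private lemma cont_int : Continuous fun y : ℝ => Real.exp (y ^ 2) := by continuity

theorem limit_z_exp_negsq_int :
    Tendsto (fun z : ℝ => z * Real.exp (-z ^ 2) * ∫ y in (0:ℝ)..z, Real.exp (y ^ 2))
      atTop (nhds (1 / 2)) := by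
  set F : ℝ → ℝ := fun z => z * Real.exp (-z ^ 2) * ∫ y in (0:ℝ)..z, Real.exp (y ^ 2) with hF
  -- lower bound
  have lower : ∀ᶠ z : ℝ in atTop, (1 - Real.exp (-2 * z ^ 2)) / 2 ≤ F z := by
    filter_upwards [eventually_ge_atTop (1:ℝ)] with z hz
    have hz0 : (0:ℝ) < z := by linarith
    have hint : ∫ y in (0:ℝ)..z, Real.exp (2*z*y - z^2)
        = Real.exp (-z^2) * ((Real.exp (2*z*z) - 1)/(2*z)) := by
      have h' : ∀ y : ℝ, Real.exp (2*z*y - z^2) = Real.exp (-z^2) * Real.exp ((2*z)*y) := by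
        intro y; rw [← Real.exp_add]; ring_nf
      simp_rw [h']
      rw [intervalIntegral.integral_const_mul, exp_int (2*z) 0 z (by positivity)]
      norm_num
    have hmono : ∫ y in (0:ℝ)..z, Real.exp (2*z*y - z^2) ≤ ∫ y in (0:ℝ)..z, Real.exp (y^2) := by
      apply intervalIntegral.integral_mono_on hz0.le
        (Continuous.intervalIntegrable (by continuity) _ _)
        (cont_int.intervalIntegrable _ _)
      intro y _
      apply Real.exp_le_exp.2
      nlinarith [sq_nonneg (y - z)]
    have step : z * Real.exp (-z^2) * (∫ y in (0:ℝ)..z, Real.exp (2*z*y - z^2)) ≤ F z :=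
      mul_le_mul_of_nonneg_left hmono (by positivity)
    have eq1 : z * Real.exp (-z^2) * (∫ y in (0:ℝ)..z, Real.exp (2*z*y - z^2))
        = (1 - Real.exp (-2 * z ^ 2))/2 := by
      rw [hint]
      have e1 : Real.exp (-z^2) * Real.exp (-z^2) = Real.exp (-2 * z^2) := by
        rw [← Real.exp_add]; congr 1; ring
      have e2 : Real.exp (-2 * z^2) * Real.exp (2*z*z) = 1 := by
        rw [← Real.exp_add, show -2 * z^2 + 2*z*z = 0 by ring, Real.exp_zero]
      have hzz : z / (2*z) = 1/2 := by
        rw [div_eq_div_iff (by positivity) (by norm_num)]; ring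
      calc z * Real.exp (-z^2) * (Real.exp (-z^2) * ((Real.exp (2*z*z) - 1)/(2*z)))
          = (Real.exp (-z^2) * Real.exp (-z^2) * Real.exp (2*z*z)
              - Real.exp (-z^2) * Real.exp (-z^2)) * (z/(2*z)) := by ring
        _ = (1 - Real.exp (-2 * z ^ 2))/2 := by rw [e1, e2, hzz]; ring
    linarith [step, eq1.symm.le, eq1.le]
  -- upper bound
  have upper : ∀ᶠ z : ℝ in atTop,
      F z ≤ z * (z-1) * Real.exp (1 - 2*z) + z / (2*z - 1) := by
    filter_upwards [eventually_ge_atTop (1:ℝ)] with z hz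
    have hz0 : (0:ℝ) < z := by linarith
    have hc : (0:ℝ) < 2*z - 1 := by linarith
    have hsplit : ∫ y in (0:ℝ)..z, Real.exp (y^2)
        = (∫ y in (0:ℝ)..(z-1), Real.exp (y^2)) + ∫ y in (z-1)..z, Real.exp (y^2) :=
      (intervalIntegral.integral_add_adjacent_intervals
        (cont_int.intervalIntegrable _ _) (cont_int.intervalIntegrable _ _)).symm
    have h1 : ∫ y in (0:ℝ)..(z-1), Real.exp (y^2) ≤ (z-1) * Real.exp ((z-1)^2) := by
      have hm : ∫ y in (0:ℝ)..(z-1), Real.exp (y^2)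
          ≤ ∫ _y in (0:ℝ)..(z-1), Real.exp ((z-1)^2) := by
        apply intervalIntegral.integral_mono_on (by linarith)
          (cont_int.intervalIntegrable _ _) (intervalIntegrable_const)
        rintro y ⟨hy1, hy2⟩
        exact Real.exp_le_exp.2 (by nlinarith)
      simpa using hm
    have h2 : ∫ y in (z-1)..z, Real.exp (y^2) ≤ Real.exp (z^2) / (2*z - 1) := by
      have hb : ∫ y in (z-1)..z, Real.exp (y^2)
          ≤ ∫ y in (z-1)..z, Real.exp (z - z^2) * Real.exp ((2*z-1)*y) := by
        apply intervalIntegral.integral_mono_on (by linarith)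
          (cont_int.intervalIntegrable _ _)
          (Continuous.intervalIntegrable (by continuity) _ _)
        rintro y ⟨hy1, hy2⟩
        rw [← Real.exp_add]
        apply Real.exp_le_exp.2
        nlinarith
      have hcalc : ∫ y in (z-1)..z, Real.exp (z - z^2) * Real.exp ((2*z-1)*y)
          = Real.exp (z - z^2) * ((Real.exp ((2*z-1)*z) - Real.exp ((2*z-1)*(z-1)))/(2*z-1)) := by
        rw [intervalIntegral.integral_const_mul, exp_int (2*z-1) (z-1) z (by positivity)]
      refine hb.trans ?_
      rw [hcalc]
      have hE : Real.exp (z - z^2) * Real.exp ((2*z-1)*z) = Real.exp (z^2) := by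
        rw [← Real.exp_add]; congr 1; ring
      have hpos : (0:ℝ) < Real.exp (z - z^2) * Real.exp ((2*z-1)*(z-1)) := by positivity
      calc Real.exp (z - z^2) * ((Real.exp ((2*z-1)*z) - Real.exp ((2*z-1)*(z-1)))/(2*z-1))
          = (Real.exp (z - z^2) * Real.exp ((2*z-1)*z)
              - Real.exp (z - z^2) * Real.exp ((2*z-1)*(z-1)))/(2*z-1) := by ring
        _ ≤ (Real.exp (z - z^2) * Real.exp ((2*z-1)*z))/(2*z-1) := by
            gcongr
            linarith [hpos]
        _ = Real.exp (z^2) / (2*z-1) := by rw [hE]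
    have key : F z ≤ z * Real.exp (-z^2) * ((z-1) * Real.exp ((z-1)^2) + Real.exp (z^2)/(2*z-1)) := by
      rw [hF]; simp only; rw [hsplit]
      exact mul_le_mul_of_nonneg_left (add_le_add h1 h2) (by positivity)
    refine key.trans (le_of_eq ?_)
    have hE1 : Real.exp (-z^2) * Real.exp ((z-1)^2) = Real.exp (1 - 2*z) := by
      rw [← Real.exp_add]; congr 1; ring
    have hE2 : Real.exp (-z^2) * Real.exp (z^2) = 1 := by
      rw [← Real.exp_add]; simp
    linear_combination (z*(z-1)) * hE1 + (z/(2*z-1)) * hE2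
  -- limits of bounds
  have hlow : Tendsto (fun z : ℝ => (1 - Real.exp (-2 * z ^ 2)) / 2) atTop (nhds (1/2)) := by
    have h1 : Tendsto (fun z : ℝ => -2 * z ^ 2) atTop atBot := by
      apply Tendsto.const_mul_atTop_of_neg (by norm_num)
      exact tendsto_pow_atTop (by norm_num)
    have hexp := Real.tendsto_exp_atBot.comp h1
    have h2 : Tendsto (fun z : ℝ => 1 - Real.exp (-2 * z ^ 2)) atTop (nhds 1) := by
      simpa using (tendsto_const_nhds (x := (1:ℝ))).sub hexp
    simpa using h2.div_const 2
  have hup : Tendsto (fun z : ℝ => z * (z-1) * Real.exp (1 - 2*z) + z / (2*z - 1))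
      atTop (nhds (1/2)) := by
    have hA : Tendsto (fun z : ℝ => z * (z-1) * Real.exp (1 - 2*z)) atTop (nhds 0) := by
      have hg : Tendsto (fun x : ℝ => Real.exp 1 * (x^2 * Real.exp (-x))/4
          - Real.exp 1 * (x^1 * Real.exp (-x))/2) atTop (nhds 0) := by
        have a2 := Real.tendsto_pow_mul_exp_neg_atTop_nhds_zero 2
        have a1 := Real.tendsto_pow_mul_exp_neg_atTop_nhds_zero 1
        have := ((a2.const_mul (Real.exp 1)).div_const 4).sub
          ((a1.const_mul (Real.exp 1)).div_const 2)
        simpa using this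
      have h2z : Tendsto (fun z : ℝ => 2 * z) atTop atTop :=
        Tendsto.const_mul_atTop (by norm_num) tendsto_id
      have hcomp := hg.comp h2z
      refine hcomp.congr fun z => ?_
      simp only [Function.comp]
      rw [show (1 : ℝ) - 2*z = 1 + (-(2*z)) by ring, Real.exp_add]
      ring
    have hB : Tendsto (fun z : ℝ => z / (2*z - 1)) atTop (nhds (1/2)) := by
      have h2 : Tendsto (fun z : ℝ => 2 - z⁻¹) atTop (nhds 2) := by
        simpa using (tendsto_const_nhds (x := (2:ℝ))).sub tendsto_inv_atTop_zero
      have hinv : Tendsto (fun z : ℝ => (2 - z⁻¹)⁻¹) atTop (nhds (1/2)) := by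
        simpa [one_div] using h2.inv₀ (by norm_num)
      refine Tendsto.congr' ?_ hinv
      filter_upwards [eventually_ge_atTop (1:ℝ)] with z hz
      have hz0 : z ≠ 0 := by intro h; rw [h] at hz; norm_num at hz
      have hc : (2:ℝ)*z - 1 ≠ 0 := by intro h; nlinarith [hz]
      field_simp
    simpa using hA.add hB
  exact tendsto_of_tendsto_of_tendsto_of_le_of_le' hlow hup lower upper
end

section
/- The function z ↦ exp(-z²) · |∫₀^z exp(y²) dy| is not integrable over ℝ, i.e., ∫_{-∞}^{∞} exp(-z²) |∫₀^z exp(y²) dy| dz = ∞. -/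
open MeasureTheory Set

lemma key_est {z : ℝ} (hz : 1 < z) :
    Real.exp (-2) * z⁻¹ ≤ Real.exp (-z ^ 2) * |∫ y in (0:ℝ)..z, Real.exp (y ^ 2)| := by
  have hz0 : (0:ℝ) < z := lt_trans one_pos hz
  set a := z - z⁻¹ with ha
  have hia : z⁻¹ ≤ 1 := by
    rw [inv_le_one_iff₀]; right; exact le_of_lt hz
  have ha0 : 0 ≤ a := by
    have : z⁻¹ ≤ z := le_trans hia (le_of_lt hz)
    simp [ha]; linarith
  have haz : a ≤ z := by
    have : 0 < z⁻¹ := inv_pos.mpr hz0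
    simp [ha]; linarith
  have hcont : ∀ u v : ℝ, IntervalIntegrable (fun y => Real.exp (y^2)) volume u v :=
    fun u v => (Real.continuous_exp.comp (continuous_pow 2)).intervalIntegrable u v
  have h1 : (0:ℝ) ≤ ∫ y in (0:ℝ)..a, Real.exp (y^2) :=
    intervalIntegral.integral_nonneg ha0 (fun y _ => (Real.exp_pos _).le)
  have h2 : z⁻¹ * Real.exp (a^2) ≤ ∫ y in a..z, Real.exp (y^2) := by
    have : ∫ y in a..z, Real.exp (a^2) ≤ ∫ y in a..z, Real.exp (y^2) := by
      apply intervalIntegral.integral_mono_on haz (intervalIntegrable_const) (hcont a z)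
      intro y hy
      apply Real.exp_le_exp.mpr
      have h0y : 0 ≤ a := ha0
      nlinarith [hy.1, hy.2]
    rw [intervalIntegral.integral_const, smul_eq_mul] at this
    calc z⁻¹ * Real.exp (a^2) = (z - a) * Real.exp (a^2) := by rw [ha]; ring_nf
    _ ≤ _ := this
  have hsplit : (∫ y in (0:ℝ)..z, Real.exp (y^2))
      = (∫ y in (0:ℝ)..a, Real.exp (y^2)) + ∫ y in a..z, Real.exp (y^2) :=
    (intervalIntegral.integral_add_adjacent_intervals (hcont 0 a) (hcont a z)).symm
  have hbig : z⁻¹ * Real.exp (a^2) ≤ ∫ y in (0:ℝ)..z, Real.exp (y^2) := by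
    rw [hsplit]; linarith
  have habs : z⁻¹ * Real.exp (a^2) ≤ |∫ y in (0:ℝ)..z, Real.exp (y^2)| :=
    le_trans hbig (le_abs_self _)
  have hexp : Real.exp (-2) ≤ Real.exp (-z^2) * Real.exp (a^2) := by
    rw [← Real.exp_add]
    apply Real.exp_le_exp.mpr
    have : a^2 = z^2 - 2 + z⁻¹^2 := by
      rw [ha]; field_simp; ring
    rw [this]; nlinarith [sq_nonneg z⁻¹]
  calc Real.exp (-2) * z⁻¹ ≤ (Real.exp (-z^2) * Real.exp (a^2)) * z⁻¹ := by
        apply mul_le_mul_of_nonneg_right hexp (inv_nonneg.mpr hz0.le)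
    _ = Real.exp (-z^2) * (z⁻¹ * Real.exp (a^2)) := by ring
    _ ≤ _ := by
        apply mul_le_mul_of_nonneg_left habs (Real.exp_pos _).le

theorem not_integrable_exp_negsq_abs_int :
    ¬ Integrable (fun z : ℝ =>
        Real.exp (-z ^ 2) * |∫ y in (0:ℝ)..z, Real.exp (y ^ 2)|) := by
  intro h
  have h1 : IntegrableOn (fun z : ℝ =>
      Real.exp (-z ^ 2) * |∫ y in (0:ℝ)..z, Real.exp (y ^ 2)|) (Ioi 1) := h.integrableOn
  have h2 : IntegrableOn (fun z : ℝ => Real.exp (-2) * z⁻¹) (Ioi 1) := by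
    apply h1.mono' ((measurable_inv.const_mul _).aestronglyMeasurable)
    filter_upwards [ae_restrict_mem measurableSet_Ioi] with z hz
    rw [Real.norm_eq_abs, abs_of_nonneg]
    · exact key_est hz
    · have h0 : (0:ℝ) < z := lt_trans one_pos hz
      positivity
  have h3 : IntegrableOn (fun z : ℝ => z⁻¹) (Ioi 1) := by
    have := h2.const_mul (Real.exp 2)
    simpa [IntegrableOn, ← mul_assoc, ← Real.exp_add] using this
  have h4 : IntegrableOn (fun z : ℝ => z ^ (-1 : ℝ)) (Ioi 1) := by
    apply h3.congr_fun _ measurableSet_Ioi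
    intro x hx
    simp [Real.rpow_neg_one]
  rw [integrableOn_Ioi_rpow_iff one_pos] at h4
  linarith
end

section
/- Let a ≠ 0, α₁ ∈ ℝ, σ > 0, and consider the 3×3 symmetric matrix Γ with entries Γ₁₁ = σ⁻², Γ₂₂ = 2σ⁻², Γ₃₃ = 1304/(3a⁸) - 112α₁/(3a⁵) + 8α₁²/(9a²), Γ₂₃ = Γ₃₂ = σ⁻¹(28/a⁴ - 4α₁/(3a)), and Γ₁₂ = Γ₂₁ = Γ₁₃ = Γ₃₁ = 0. Then det Γ > 0; in particular Γ is nonsingular for every choice of a ≠ 0 and α₁. -/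
theorem info_matrix_nonsingular (a α₁ σ : ℝ) (ha : a ≠ 0) (hσ : 0 < σ) :
    0 < Matrix.det
      (Matrix.of
        ![![σ⁻¹ ^ 2, 0, 0],
          ![0, 2 * σ⁻¹ ^ 2, σ⁻¹ * (28 / a ^ 4 - 4 * α₁ / (3 * a))],
          ![0, σ⁻¹ * (28 / a ^ 4 - 4 * α₁ / (3 * a)),
            1304 / (3 * a ^ 8) - 112 * α₁ / (3 * a ^ 5) + 8 * α₁ ^ 2 / (9 * a ^ 2)]]) := by
  have hσ' : σ ≠ 0 := ne_of_gt hσ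
  rw [Matrix.det_fin_three]
  simp only [Matrix.of_apply, Matrix.cons_val', Matrix.cons_val_zero, Matrix.cons_val_one,
    Matrix.head_cons, Matrix.empty_val', Matrix.cons_val_fin_one, Matrix.head_fin_const,
    Matrix.cons_val_two, Matrix.tail_cons]
  have key : σ⁻¹ ^ 2 * (2 * σ⁻¹ ^ 2 * (1304 / (3 * a ^ 8) - 112 * α₁ / (3 * a ^ 5) + 8 * α₁ ^ 2 / (9 * a ^ 2)) - σ⁻¹ * (28 / a ^ 4 - 4 * α₁ / (3 * a)) * (σ⁻¹ * (28 / a ^ 4 - 4 * α₁ / (3 * a)))) = σ⁻¹ ^ 4 * (256 / (3 * a ^ 8)) := by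
    field_simp
    ring
  have h8 : 0 < a ^ 8 := by positivity
  nlinarith [key, pow_pos (inv_pos.mpr hσ) 4, div_pos (by norm_num : (0:ℝ) < 256) (by positivity : (0:ℝ) < 3 * a ^ 8), mul_pos (pow_pos (inv_pos.mpr hσ) 4) (div_pos (by norm_num : (0:ℝ) < 256) (by positivity : (0:ℝ) < 3 * a ^ 8))]
end

section
/- For the standard skew-normal skewing function Π(z,δ) = Φ(δz) with Φ the standard normal c.d.f., the third derivative Υ(z) := ∂³_δ Φ(δz)|_{δ=0} equals -z³/√(2π), and with a = √(2π) one has Υ(z) ≠ -(8/a³) z³ for z ≠ 0; consequently the quantity (8/(3a³))z³ - (8/a³)z + (1/3)Υ(z) equals ((4-π)/(3π√(2π))) z³ - (4/(π√(2π))) z and is not a scalar multiple of z. -/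
noncomputable def stdNormalPDF : ℝ → ℝ :=
  fun z => (Real.sqrt (2 * Real.pi))⁻¹ * Real.exp (-z ^ 2 / 2)

noncomputable def stdNormalCDF : ℝ → ℝ :=
  fun z => ∫ t in Set.Iic z, stdNormalPDF t

open MeasureTheory Real

lemma pdf_integrable : Integrable stdNormalPDF := by
  have h : Integrable fun x : ℝ => Real.exp (-(1/2 : ℝ) * x ^ 2) :=
    integrable_exp_neg_mul_sq (by norm_num)
  have := h.const_mul (Real.sqrt (2 * Real.pi))⁻¹
  refine this.congr (Filter.Eventually.of_forall fun x => ?_)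
  simp only [stdNormalPDF]
  ring_nf

lemma pdf_continuous : Continuous stdNormalPDF := by
  unfold stdNormalPDF
  fun_prop

lemma cdf_hasDerivAt (x : ℝ) : HasDerivAt stdNormalCDF (stdNormalPDF x) x := by
  have key : ∀ y : ℝ, stdNormalCDF y = stdNormalCDF 0 + ∫ t in (0:ℝ)..y, stdNormalPDF t := by
    intro y
    have := intervalIntegral.integral_Iic_sub_Iic (μ := volume) (f := stdNormalPDF)
      (pdf_integrable.integrableOn) (pdf_integrable.integrableOn) (a := 0) (b := y)
    simp only [stdNormalCDF]; linarith
  have h : HasDerivAt (fun u => ∫ t in (0:ℝ)..u, stdNormalPDF t) (stdNormalPDF x) x :=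
    intervalIntegral.integral_hasDerivAt_right (pdf_integrable.intervalIntegrable)
      (pdf_continuous.aestronglyMeasurable.stronglyMeasurableAtFilter) pdf_continuous.continuousAt
  have := h.const_add (stdNormalCDF 0)
  exact this.congr_of_eventuallyEq (Filter.Eventually.of_forall fun y => (key y))

lemma pdf_hasDerivAt (x : ℝ) : HasDerivAt stdNormalPDF (-x * stdNormalPDF x) x := by
  have h1 : HasDerivAt (fun y : ℝ => -y ^ 2 / 2) (-x) x := by
    have := (hasDerivAt_pow 2 x).neg.div_const 2
    refine this.congr_deriv ?_; norm_num; ring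
  have := (h1.exp).const_mul (Real.sqrt (2 * Real.pi))⁻¹
  refine this.congr_deriv ?_
  simp only [stdNormalPDF]; ring

lemma comp_hasDerivAt (z δ : ℝ) :
    HasDerivAt (fun δ => stdNormalCDF (δ * z)) (stdNormalPDF (δ * z) * z) δ :=
  by have := (cdf_hasDerivAt (δ * z)).comp δ (hasDerivAt_mul_const z); exact this

lemma pdf_comp_hasDerivAt (z δ : ℝ) :
    HasDerivAt (fun δ => stdNormalPDF (δ * z)) (-(δ * z) * stdNormalPDF (δ * z) * z) δ :=
  by have := (pdf_hasDerivAt (δ * z)).comp δ (hasDerivAt_mul_const z); exact this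

lemma third_deriv (z : ℝ) :
    iteratedDeriv 3 (fun δ => stdNormalCDF (δ * z)) 0 = -z ^ 3 / Real.sqrt (2 * Real.pi) := by
  have e1 : deriv (fun δ => stdNormalCDF (δ * z)) = fun δ => stdNormalPDF (δ * z) * z :=
    funext fun δ => (comp_hasDerivAt z δ).deriv
  have e2 : deriv (fun δ => stdNormalPDF (δ * z) * z)
      = fun δ => -(δ * z) * stdNormalPDF (δ * z) * z * z :=
    funext fun δ => ((pdf_comp_hasDerivAt z δ).mul_const z).deriv
  have e3 : deriv (fun δ => -(δ * z) * stdNormalPDF (δ * z) * z * z) 0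
      = -z ^ 3 * stdNormalPDF 0 := by
    have h : HasDerivAt (fun δ => -(δ * z) * stdNormalPDF (δ * z) * z * z)
        (-z ^ 3 * stdNormalPDF 0) 0 := by
      have hm : HasDerivAt (fun δ : ℝ => δ * stdNormalPDF (δ * z)) (stdNormalPDF 0) 0 := by
        have := (hasDerivAt_id' (0:ℝ)).mul (pdf_comp_hasDerivAt z 0)
        exact this.congr_deriv (by simp)
      have := hm.const_mul (-z ^ 3)
      refine this.congr_of_eventuallyEq (Filter.Eventually.of_forall fun δ => ?_) |>.congr_deriv ?_
      · ring
      · rfl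
    exact h.deriv
  have hpdf0 : stdNormalPDF 0 = (Real.sqrt (2 * Real.pi))⁻¹ := by
    simp [stdNormalPDF]
  rw [show (3:ℕ) = 2 + 1 from rfl, iteratedDeriv_succ, show (2:ℕ) = 1 + 1 from rfl,
    iteratedDeriv_succ, iteratedDeriv_one, e1, e2, e3, hpdf0]
  field_simp

theorem skew_normal_double_not_triple_singularity :
    (∀ z : ℝ, iteratedDeriv 3 (fun δ => stdNormalCDF (δ * z)) 0
        = -z ^ 3 / Real.sqrt (2 * Real.pi)) ∧
    (∀ z : ℝ, z ≠ 0 →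
      iteratedDeriv 3 (fun δ => stdNormalCDF (δ * z)) 0
        ≠ -(8 / Real.sqrt (2 * Real.pi) ^ 3) * z ^ 3) ∧
    (∀ z : ℝ,
      8 / (3 * Real.sqrt (2 * Real.pi) ^ 3) * z ^ 3 - 8 / Real.sqrt (2 * Real.pi) ^ 3 * z
          + 1 / 3 * iteratedDeriv 3 (fun δ => stdNormalCDF (δ * z)) 0
        = (4 - Real.pi) / (3 * Real.pi * Real.sqrt (2 * Real.pi)) * z ^ 3
          - 4 / (Real.pi * Real.sqrt (2 * Real.pi)) * z) ∧
    ¬ ∃ c : ℝ, ∀ z : ℝ,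
      8 / (3 * Real.sqrt (2 * Real.pi) ^ 3) * z ^ 3 - 8 / Real.sqrt (2 * Real.pi) ^ 3 * z
          + 1 / 3 * iteratedDeriv 3 (fun δ => stdNormalCDF (δ * z)) 0
        = c * z := by
  have hπ : (0:ℝ) < Real.pi := Real.pi_pos
  have ha0 : (0:ℝ) < Real.sqrt (2 * Real.pi) := Real.sqrt_pos.mpr (by linarith)
  have ha2 : Real.sqrt (2 * Real.pi) ^ 2 = 2 * Real.pi := Real.sq_sqrt (by linarith)
  have ha3 : Real.sqrt (2 * Real.pi) ^ 3 = 2 * Real.pi * Real.sqrt (2 * Real.pi) := by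
    rw [pow_succ, ha2]
  have hπ4 : Real.pi < 4 := by linarith [Real.pi_lt_d2]
  have key : ∀ z : ℝ,
      8 / (3 * Real.sqrt (2 * Real.pi) ^ 3) * z ^ 3 - 8 / Real.sqrt (2 * Real.pi) ^ 3 * z
          + 1 / 3 * iteratedDeriv 3 (fun δ => stdNormalCDF (δ * z)) 0
        = (4 - Real.pi) / (3 * Real.pi * Real.sqrt (2 * Real.pi)) * z ^ 3
          - 4 / (Real.pi * Real.sqrt (2 * Real.pi)) * z := by
    intro z
    rw [third_deriv, ha3]
    field_simp
    ring
  refine ⟨third_deriv, ?_, key, ?_⟩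
  · intro z hz h
    rw [third_deriv, ha3] at h
    have hz3 : z ^ 3 ≠ 0 := pow_ne_zero _ hz
    field_simp at h
    have hs : (0:ℝ) < Real.sqrt 2 * Real.sqrt Real.pi :=
      mul_pos (Real.sqrt_pos.mpr (by norm_num)) (Real.sqrt_pos.mpr hπ)
    have h' : (2 * Real.pi) * (z ^ 3 * (Real.sqrt 2 * Real.sqrt Real.pi))
        = 8 * (z ^ 3 * (Real.sqrt 2 * Real.sqrt Real.pi)) := by linear_combination (-(z ^ 3 * (Real.sqrt 2 * Real.sqrt Real.pi))) * h
    have := mul_right_cancel₀ (mul_ne_zero hz3 hs.ne') h'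
    linarith
  · rintro ⟨c, hc⟩
    have h1 := (key 1).symm.trans (hc 1)
    have h2 := (key 2).symm.trans (hc 2)
    norm_num at h1 h2
    have hs2 : (0:ℝ) < Real.sqrt 2 := Real.sqrt_pos.mpr (by norm_num)
    have hsp : (0:ℝ) < Real.sqrt Real.pi := Real.sqrt_pos.mpr hπ
    have hA : (4 - Real.pi) / (3 * Real.pi * (Real.sqrt 2 * Real.sqrt Real.pi)) = 0 := by
      linarith
    rw [div_eq_zero_iff] at hA
    rcases hA with h | h
    · linarith
    · have : (0:ℝ) < 3 * Real.pi * (Real.sqrt 2 * Real.sqrt Real.pi) := by positivity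
      linarith
end

section
/- Let G : ℝ → ℝ be a symmetric c.d.f. (G(-y) = 1 - G(y)) with density g three times continuously differentiable, and set a = 1/g(0) (assuming g(0) > 0). For the skew normal-G family with skewing function Π(z,δ) = G(δz), one has ∂³_δ Π(z,δ)|_{δ=0} = g''(0) z³; hence the third-order score (8/(3a³))z³ - (8/a³)z + (1/3)g''(0)z³ is a scalar multiple of z (triple singularity) if and only if g''(0) = -8 g(0)³. -/
theorem skew_normal_G_triple_singularity_iff
    (G g : ℝ → ℝ)
    (hG_symm : ∀ y, G (-y) = 1 - G y)
    (hG_deriv : ∀ y, HasDerivAt G (g y) y)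
    (hg_C3 : ContDiff ℝ 3 g)
    (hg0 : 0 < g 0)
    (a : ℝ) (ha : a = 1 / g 0) :
    (∀ z : ℝ, iteratedDeriv 3 (fun δ => G (δ * z)) 0 = deriv (deriv g) 0 * z ^ 3) ∧
    ((∃ c : ℝ, ∀ z : ℝ,
        8 / (3 * a ^ 3) * z ^ 3 - 8 / a ^ 3 * z
            + 1 / 3 * (deriv (deriv g) 0 * z ^ 3) = c * z)
      ↔ deriv (deriv g) 0 = -8 * g 0 ^ 3) := by
  have hderivG : deriv G = g := funext fun y => (hG_deriv y).deriv
  have hG_C3 : ContDiff ℝ 3 G := by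
    have h32 : (3 : WithTop ℕ∞) = 2 + 1 := by norm_num
    rw [h32, contDiff_succ_iff_deriv]
    refine ⟨fun y => (hG_deriv y).differentiableAt, by simp, ?_⟩
    rw [hderivG]
    exact hg_C3.of_le (by norm_num)
  have hiter : iteratedDeriv 3 G 0 = deriv (deriv g) 0 := by
    rw [show (3 : ℕ) = 0 + 1 + 1 + 1 from rfl, iteratedDeriv_succ', iteratedDeriv_succ',
      iteratedDeriv_succ', iteratedDeriv_zero, hderivG]
  constructor
  · intro z
    have h1 : (fun δ => G (δ * z)) = fun δ => G (z * δ) := by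
      funext δ; rw [mul_comm]
    rw [h1, iteratedDeriv_comp_const_mul hG_C3 z]
    simp [hiter, mul_comm]
  · have ha3 : a ^ 3 = 1 / g 0 ^ 3 := by rw [ha]; ring
    have hg3 : g 0 ^ 3 ≠ 0 := pow_ne_zero _ (ne_of_gt hg0)
    have hinv : 8 / a ^ 3 = 8 * g 0 ^ 3 := by
      rw [ha3]; field_simp
    constructor
    · rintro ⟨c, hc⟩
      have h1 := hc 1
      have h2 := hc 2
      have hA : 8 / (3 * a ^ 3) + 1 / 3 * deriv (deriv g) 0 = 0 := by nlinarith [h1, h2]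
      have : 8 / (3 * a ^ 3) = (8 : ℝ) / 3 * g 0 ^ 3 := by
        rw [ha3]; field_simp
      nlinarith [hA]
    · intro h
      refine ⟨-(8 * g 0 ^ 3), fun z => ?_⟩
      have : 8 / (3 * a ^ 3) = (8 : ℝ) / 3 * g 0 ^ 3 := by
        rw [ha3]; field_simp
      rw [h, hinv, this]; ring
end
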